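/- (Non-resonance on dyadic scales) Let d ≥ 1 and let h be the dyadic–triadic potential on ℤ^d. For every integer M ≥ 1, every a ∈ ℤ^d, and every function σ : ℤ^d → {−1,0,1} that vanishes outside the shifted box a + Λ_{2^M} and is not identically zero, |∑_{n ∈ a+Λ_{2^M}} σ_n·h_n| ≥ 3^{−2^{dM+1}}. -/

import Mathlib

/-- `bdig k n` is the `k`-th binary digit of the integer `n` (floor division). -/
def bdig (k : ℕ) (n : ℤ) : ℤ := (n / 2 ^ k) % 2

/-- `pm d m n = (∑_{k=0}^{m-1} 2^{dk}(1 + ∑_{j=1}^d 2^{j-1} b_k(n_j))) - 1`. -/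
def pm (d m : ℕ) (n : Fin d → ℤ) : ℤ :=
  (∑ k ∈ Finset.range m, 2 ^ (d * k) * (1 + ∑ j : Fin d, 2 ^ (j : ℕ) * bdig k (n j))) - 1

/-- The dyadic–triadic potential `h_n = ∑_{m=1}^∞ 3^{−p_m(n)}`. -/
noncomputable def hpot (d : ℕ) (n : Fin d → ℤ) : ℝ :=
  ∑' m : ℕ, (3 : ℝ) ^ (-(pm d (m + 1) n))

/-!
Write `h_n = ∑_{m ≥ 1} 3^{-p_m(n)}`. Exponents are separated by level (`p_m(n) < p_{m+1}(n')`
for all `n, n'`), and on a box of side `2^M` every `p_m` with `m ≥ M` is injective, since `p_m(n)`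
encodes the first `m` binary digits of all coordinates of `n`. Let `n₀` maximize `p_M` on the
support of `σ` and put `p = p_M(n₀)`. The terms of level `m ≤ M` have exponents `≤ p`, with
equality only for `(n₀, M)`, so their sum is `3^{-p}` times an integer `≡ σ_{n₀} = ±1 (mod 3)`:
it has absolute value at least `3^{-p}`. The remaining exponents exceed `p`, are distinct for fixed
`n`, and those of level `M + 1` are distinct across `n`; two geometric series bound the remainder
by `(9/4) 3^{-(p+1)} = (3/4) 3^{-p}`. Finally `p + 3 ≤ 2^{dM+1}`.
-/

open Finset

section Geometric

variable {ι : Type*}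

theorem sum_pow_le_of_injOn {r : ℝ} (h₀ : 0 ≤ r) (h₁ : r < 1) {s : Finset ι} {k : ι → ℕ}
    (hk : Set.InjOn k s) : ∑ i ∈ s, r ^ k i ≤ (1 - r)⁻¹ := by
  classical
  rw [← sum_image hk, ← tsum_geometric_of_lt_one h₀ h₁]
  exact (summable_geometric_of_lt_one h₀ h₁).sum_le_tsum _ fun _ _ => by positivity

theorem sum_zpow_neg_le_of_injOn {b : ℝ} (hb : 1 < b) {s : Finset ι} {e : ι → ℤ}
    (he : Set.InjOn e s) {x : ℤ} (hx : ∀ i ∈ s, x ≤ e i) :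
    ∑ i ∈ s, b ^ (-e i) ≤ (1 - b⁻¹)⁻¹ * b ^ (-x) := by
  have hb₀ : b ≠ 0 := by positivity
  have hshift : ∀ i ∈ s, b ^ (-e i) = b ^ (-x) * b⁻¹ ^ (e i - x).toNat := fun i hi => by
    rw [inv_pow, ← zpow_natCast, Int.toNat_of_nonneg (sub_nonneg.2 (hx i hi)), ← zpow_neg,
      ← zpow_add₀ hb₀]
    ring_nf
  have hinj : Set.InjOn (fun i => (e i - x).toNat) s := fun i hi j hj hij => by
    have := hx i hi; have := hx j hj
    exact he hi hj (by simp only at hij; omega)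
  rw [sum_congr rfl hshift, ← mul_sum, mul_comm]
  exact mul_le_mul_of_nonneg_right
    (sum_pow_le_of_injOn (by positivity) (inv_lt_one_of_one_lt₀ hb) hinj) (by positivity)

theorem summable_zpow_neg_of_injective {b : ℝ} (hb : 1 < b) {e : ι → ℤ}
    (he : Function.Injective e) {x : ℤ} (hx : ∀ i, x ≤ e i) :
    Summable fun i => b ^ (-e i) :=
  summable_of_sum_le (fun _ => by positivity) fun _ =>
    sum_zpow_neg_le_of_injOn hb he.injOn fun i _ => hx i

theorem tsum_zpow_neg_le_of_injective {b : ℝ} (hb : 1 < b) {e : ι → ℤ}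
    (he : Function.Injective e) {x : ℤ} (hx : ∀ i, x ≤ e i) :
    ∑' i, b ^ (-e i) ≤ (1 - b⁻¹)⁻¹ * b ^ (-x) :=
  have : 0 < (1 - b⁻¹)⁻¹ := inv_pos.2 (sub_pos.2 (inv_lt_one_of_one_lt₀ hb))
  tsum_le_of_sum_le' (by positivity) fun _ =>
    sum_zpow_neg_le_of_injOn hb he.injOn fun i _ => hx i

/-- The dominant term cannot be cancelled: after scaling by `b ^ e i₀` the sum is an integer
congruent to `c i₀` modulo `b`. -/
theorem zpow_neg_le_abs_sum_of_not_dvd {b : ℤ} (hb : 0 < b) {s : Finset ι} {c e : ι → ℤ}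
    {i₀ : ι} (hi₀ : i₀ ∈ s) (he : ∀ i ∈ s, i ≠ i₀ → e i < e i₀) (hc : ¬ b ∣ c i₀) :
    (b : ℝ) ^ (-e i₀) ≤ |∑ i ∈ s, (c i : ℝ) * (b : ℝ) ^ (-e i)| := by
  classical
  set N : ℤ := ∑ i ∈ s, c i * b ^ (e i₀ - e i).toNat
  have hle : ∀ i ∈ s, e i ≤ e i₀ := fun i hi => by
    rcases eq_or_ne i i₀ with rfl | h
    · rfl
    · exact (he i hi h).le
  have hsum : ∑ i ∈ s, (c i : ℝ) * (b : ℝ) ^ (-e i) = (b : ℝ) ^ (-e i₀) * N := by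
    push_cast [N, mul_sum]
    refine sum_congr rfl fun i hi => ?_
    rw [← zpow_natCast, Int.toNat_of_nonneg (sub_nonneg.2 (hle i hi)), mul_left_comm,
      ← zpow_add₀ (by positivity)]
    ring_nf
  have hdvd : b ∣ N - c i₀ := by
    change b ∣ ∑ i ∈ s, c i * b ^ (e i₀ - e i).toNat - c i₀
    rw [← add_sum_erase s _ hi₀, sub_self, Int.toNat_zero, pow_zero, mul_one,
      add_sub_cancel_left]
    refine dvd_sum fun i hi => dvd_mul_of_dvd_right (dvd_pow_self b ?_) _
    have := he i (mem_of_mem_erase hi) (ne_of_mem_erase hi)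
    omega
  have hN : N ≠ 0 := fun h => hc (by simpa [h] using hdvd)
  rw [hsum, abs_mul, abs_of_pos (by positivity)]
  exact le_mul_of_one_le_right (by positivity) (by exact_mod_cast Int.one_le_abs hN)

end Geometric

theorem eq_of_sum_pow_mul_eq {β : ℤ} :
    ∀ {m : ℕ} {D E : Fin m → ℤ}, (∀ i, |D i - E i| < β) →
      ∑ i : Fin m, β ^ (i : ℕ) * D i = ∑ i : Fin m, β ^ (i : ℕ) * E i → D = E
  | 0, _, _, _, _ => Subsingleton.elim _ _
  | m + 1, D, E, hDE, h => by
    have hβ : β ≠ 0 := ((abs_nonneg _).trans_lt (hDE 0)).ne'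
    simp only [Fin.sum_univ_succ, Fin.val_zero, pow_zero, one_mul, Fin.val_succ, pow_succ',
      mul_assoc, ← mul_sum] at h
    have h₀ : D 0 = E 0 := by
      have hdvd : β ∣ D 0 - E 0 :=
        ⟨∑ i : Fin m, β ^ (i : ℕ) * E i.succ - ∑ i : Fin m, β ^ (i : ℕ) * D i.succ,
          by linear_combination h⟩
      exact sub_eq_zero.1 (Int.eq_zero_of_abs_lt_dvd hdvd (hDE 0))
    have htail : (fun i : Fin m => D i.succ) = fun i => E i.succ :=
      eq_of_sum_pow_mul_eq (fun i => hDE i.succ)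
        (mul_left_cancel₀ hβ (by linear_combination h - h₀))
    funext i
    cases i using Fin.cases with
    | zero => exact h₀
    | succ i => exact congrFun htail i

section Digits

theorem bdig_nonneg (k : ℕ) (n : ℤ) : 0 ≤ bdig k n :=
  Int.emod_nonneg _ two_ne_zero

theorem bdig_lt_two (k : ℕ) (n : ℤ) : bdig k n < 2 :=
  Int.emod_lt_of_pos _ two_pos

theorem bdig_succ (k : ℕ) (n : ℤ) : bdig (k + 1) n = bdig k (n / 2) := by
  rw [bdig, bdig, Int.ediv_ediv_of_nonneg two_pos.le, pow_succ']

theorem two_pow_dvd_sub_of_bdig_eq :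
    ∀ {m : ℕ} {x y : ℤ}, (∀ k < m, bdig k x = bdig k y) → 2 ^ m ∣ x - y
  | 0, _, _, _ => by simp
  | m + 1, x, y, h => by
    have hlow : x % 2 = y % 2 := by simpa [bdig] using h 0 m.succ_pos
    have hhigh : 2 ^ m ∣ x / 2 - y / 2 :=
      two_pow_dvd_sub_of_bdig_eq fun k hk => by
        simpa only [bdig_succ] using h (k + 1) (by omega)
    obtain ⟨q, hq⟩ := hhigh
    exact ⟨q, by
      rw [pow_succ']
      linear_combination -Int.emod_add_mul_ediv x 2 + Int.emod_add_mul_ediv y 2 + hlow + 2 * hq⟩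

variable {d : ℕ}

/-- The `k`-th digit, in base `2 ^ d`, of the number obtained by interleaving the binary digits
of the coordinates of `n`. -/
def blockDigit (d k : ℕ) (n : Fin d → ℤ) : ℤ := ∑ j : Fin d, 2 ^ (j : ℕ) * bdig k (n j)

theorem blockDigit_nonneg (k : ℕ) (n : Fin d → ℤ) : 0 ≤ blockDigit d k n :=
  sum_nonneg fun j _ => mul_nonneg (by positivity) (bdig_nonneg _ _)

theorem blockDigit_lt (k : ℕ) (n : Fin d → ℤ) : blockDigit d k n < 2 ^ d := by
  have hgeom : ∑ j : Fin d, (2 : ℤ) ^ (j : ℕ) = 2 ^ d - 1 := by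
    rw [← Finset.sum_range fun j => (2 : ℤ) ^ j]
    simpa using geom_sum_mul (2 : ℤ) d
  have hle : blockDigit d k n ≤ ∑ j : Fin d, (2 : ℤ) ^ (j : ℕ) :=
    sum_le_sum fun j _ =>
      mul_le_of_le_one_right (by positivity) (by linarith [bdig_lt_two k (n j)])
  omega

theorem bdig_eq_of_blockDigit_eq {k : ℕ} {n n' : Fin d → ℤ}
    (h : blockDigit d k n = blockDigit d k n') (j : Fin d) : bdig k (n j) = bdig k (n' j) := by
  refine congrFun (eq_of_sum_pow_mul_eq (fun j => ?_) h) j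
  have := bdig_nonneg k (n j); have := bdig_lt_two k (n j)
  have := bdig_nonneg k (n' j); have := bdig_lt_two k (n' j)
  rw [abs_lt]; constructor <;> linarith

theorem pm_add_one_eq (m : ℕ) (n : Fin d → ℤ) :
    pm d m n + 1 = ∑ k ∈ range m, 2 ^ (d * k) * (1 + blockDigit d k n) :=
  sub_add_cancel _ _

theorem pm_succ (m : ℕ) (n : Fin d → ℤ) :
    pm d (m + 1) n = pm d m n + 2 ^ (d * m) * (1 + blockDigit d m n) := by
  simp only [pm, blockDigit, sum_range_succ]
  ring

theorem sum_two_pow_le_pm_add_one (m : ℕ) (n : Fin d → ℤ) :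
    ∑ k ∈ range m, (2 : ℤ) ^ (d * k) ≤ pm d m n + 1 := by
  rw [pm_add_one_eq]
  exact sum_le_sum fun k _ =>
    le_mul_of_one_le_right (by positivity) (by linarith [blockDigit_nonneg k n])

theorem pm_add_one_le (m : ℕ) (n : Fin d → ℤ) :
    pm d m n + 1 ≤ ∑ k ∈ range m, (2 : ℤ) ^ (d * (k + 1)) := by
  rw [pm_add_one_eq]
  refine sum_le_sum fun k _ => ?_
  rw [mul_add_one, pow_add]
  exact mul_le_mul_of_nonneg_left (by linarith [blockDigit_lt k n]) (by positivity)

theorem pm_lt_pm_succ (m : ℕ) (n n' : Fin d → ℤ) : pm d m n < pm d (m + 1) n' := by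
  have := sum_range_succ' (fun k => (2 : ℤ) ^ (d * k)) m
  have := pm_add_one_le m n
  have := sum_two_pow_le_pm_add_one (m + 1) n'
  simp only [mul_zero, pow_zero] at *
  linarith

theorem pm_strictMono (n : Fin d → ℤ) : StrictMono fun m => pm d m n :=
  strictMono_nat_of_lt_succ fun m => pm_lt_pm_succ m n n

theorem pm_lt_pm {m m' : ℕ} (h : m < m') (n n' : Fin d → ℤ) : pm d m n < pm d m' n' :=
  (pm_lt_pm_succ m n n').trans_le ((pm_strictMono n').monotone h)

theorem pm_add_three_le (hd : 1 ≤ d) (n : Fin d → ℤ) : ∀ m, pm d m n + 3 ≤ 2 ^ (d * m + 1)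
  | 0 => by simp [pm]
  | m + 1 => by
    have ih := pm_add_three_le hd n m
    have hdig := blockDigit_lt m n
    have h2d : (2 : ℤ) ≤ 2 ^ d := by simpa using pow_le_pow_right₀ (by norm_num : (1 : ℤ) ≤ 2) hd
    have hpos : (0 : ℤ) < 2 ^ (d * m) := by positivity
    rw [pm_succ, show d * (m + 1) + 1 = d * m + d + 1 by ring, pow_succ, pow_add]
    rw [pow_succ] at ih
    nlinarith

theorem blockDigit_eq_of_pm_eq {m : ℕ} {n n' : Fin d → ℤ} (h : pm d m n = pm d m n') :
    ∀ k < m, blockDigit d k n = blockDigit d k n' := by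
  have hsum : ∑ k : Fin m, (2 ^ d : ℤ) ^ (k : ℕ) * (1 + blockDigit d k n) =
      ∑ k : Fin m, (2 ^ d : ℤ) ^ (k : ℕ) * (1 + blockDigit d k n') := by
    have e := pm_add_one_eq m n
    have e' := pm_add_one_eq m n'
    rw [Finset.sum_range] at e e'
    simp only [← pow_mul]
    linarith
  intro k hk
  have hdig := congrFun (eq_of_sum_pow_mul_eq (fun i => ?_) hsum) ⟨k, hk⟩
  · simpa using hdig
  have := blockDigit_nonneg i n; have := blockDigit_lt i n
  have := blockDigit_nonneg i n'; have := blockDigit_lt i n'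
  rw [abs_lt]; constructor <;> linarith

def shiftedBox (a : Fin d → ℤ) (M : ℕ) : Set (Fin d → ℤ) :=
  {n | ∀ j, a j ≤ n j ∧ n j < a j + 2 ^ M}

theorem pm_injOn {M m : ℕ} (hm : M ≤ m) (a : Fin d → ℤ) :
    Set.InjOn (pm d m) (shiftedBox a M) := fun n hn n' hn' h => by
  funext j
  have hdvd : 2 ^ m ∣ n j - n' j := two_pow_dvd_sub_of_bdig_eq fun k hk =>
    bdig_eq_of_blockDigit_eq (blockDigit_eq_of_pm_eq h k hk) j
  have hM : (2 : ℤ) ^ M ≤ 2 ^ m := pow_le_pow_right₀ (by norm_num) hm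
  have := hn j; have := hn' j
  exact sub_eq_zero.1 (Int.eq_zero_of_abs_lt_dvd hdvd (by rw [abs_lt]; constructor <;> linarith))

end Digits

section Potential

variable {d : ℕ}

noncomputable def hpotHead (d M : ℕ) (n : Fin d → ℤ) : ℝ :=
  ∑ m ∈ range M, (3 : ℝ) ^ (-pm d (m + 1) n)

noncomputable def hpotTail (d M : ℕ) (n : Fin d → ℤ) : ℝ :=
  ∑' m : ℕ, (3 : ℝ) ^ (-pm d (m + M + 1) n)

theorem hpot_eq_head_add_tail (M : ℕ) (n : Fin d → ℤ) :
    hpot d n = hpotHead d M n + hpotTail d M n := by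
  have hsum : Summable fun m : ℕ => (3 : ℝ) ^ (-pm d (m + 1) n) :=
    summable_zpow_neg_of_injective (by norm_num)
      ((pm_strictMono n).injective.comp (add_left_injective 1))
      fun m => (pm_lt_pm_succ 0 n n).le.trans ((pm_strictMono n).monotone (by omega))
  exact (hsum.sum_add_tsum_nat_add M).symm

theorem hpotTail_le (M : ℕ) (n : Fin d → ℤ) :
    hpotTail d M n ≤ 3 / 2 * (3 : ℝ) ^ (-pm d (M + 1) n) := by
  have h := tsum_zpow_neg_le_of_injective (b := 3) (by norm_num)
    (e := fun m => pm d (m + M + 1) n)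
    ((pm_strictMono n).injective.comp fun _ _ h => by simpa using h)
    fun m => (pm_strictMono n).monotone (show M + 1 ≤ m + M + 1 by omega)
  rwa [show (1 - (3 : ℝ)⁻¹)⁻¹ = 3 / 2 by norm_num] at h

theorem abs_sum_mul_hpotTail_le {a : Fin d → ℤ} {M : ℕ} {s : Finset (Fin d → ℤ)}
    (hs : ↑s ⊆ shiftedBox a M) {c : (Fin d → ℤ) → ℤ} (hc : ∀ n ∈ s, |c n| ≤ 1) {x : ℤ}
    (hx : ∀ n ∈ s, x ≤ pm d (M + 1) n) :
    |∑ n ∈ s, (c n : ℝ) * hpotTail d M n| ≤ 9 / 4 * (3 : ℝ) ^ (-x) := by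
  have hT : ∀ n, 0 ≤ hpotTail d M n := fun n => tsum_nonneg fun _ => by positivity
  calc |∑ n ∈ s, (c n : ℝ) * hpotTail d M n|
      ≤ ∑ n ∈ s, hpotTail d M n := by
        refine (abs_sum_le_sum_abs _ _).trans (sum_le_sum fun n hn => ?_)
        rw [abs_mul, abs_of_nonneg (hT n)]
        exact mul_le_of_le_one_left (hT n) (by exact_mod_cast hc n hn)
    _ ≤ ∑ n ∈ s, 3 / 2 * (3 : ℝ) ^ (-pm d (M + 1) n) := sum_le_sum fun n _ => hpotTail_le M n
    _ ≤ 3 / 2 * (3 / 2 * (3 : ℝ) ^ (-x)) := by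
        rw [← mul_sum]
        have h := sum_zpow_neg_le_of_injOn (b := 3) (by norm_num)
          ((pm_injOn (Nat.le_succ M) a).mono hs) hx
        rw [show (1 - (3 : ℝ)⁻¹)⁻¹ = 3 / 2 by norm_num] at h
        gcongr
    _ = 9 / 4 * (3 : ℝ) ^ (-x) := by ring

theorem zpow_neg_pm_le_abs_sum_mul_hpotHead {a : Fin d → ℤ} {M : ℕ} (hM : 1 ≤ M)
    {s : Finset (Fin d → ℤ)} (hs : ↑s ⊆ shiftedBox a M) {c : (Fin d → ℤ) → ℤ}
    {n₀ : Fin d → ℤ} (hn₀ : n₀ ∈ s) (hmax : ∀ n ∈ s, pm d M n ≤ pm d M n₀) (hc : ¬ 3 ∣ c n₀) :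
    (3 : ℝ) ^ (-pm d M n₀) ≤ |∑ n ∈ s, (c n : ℝ) * hpotHead d M n| := by
  obtain ⟨M, rfl⟩ : ∃ M', M = M' + 1 := ⟨M - 1, by omega⟩
  have hexp : ∀ x ∈ s ×ˢ range (M + 1), x ≠ (n₀, M) →
      pm d (x.2 + 1) x.1 < pm d (M + 1) n₀ := by
    rintro ⟨n, m⟩ hx hne
    obtain ⟨hn, hm⟩ := mem_product.1 hx
    rcases lt_or_eq_of_le (Nat.lt_succ_iff.1 (mem_range.1 hm)) with hm | rfl
    · exact pm_lt_pm (by omega) n n₀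
    · have hne : n ≠ n₀ := fun h => hne (by rw [h])
      exact lt_of_le_of_ne (hmax n hn) fun h => hne (pm_injOn le_rfl a (hs hn) (hs hn₀) h)
  have h := zpow_neg_le_abs_sum_of_not_dvd (b := 3) (by norm_num) (c := fun x => c x.1)
    (mem_product.2 ⟨hn₀, self_mem_range_succ M⟩) hexp hc
  simpa only [hpotHead, mul_sum, sum_product, Int.cast_ofNat] using h

end Potential

theorem zpow_neg_add_three_le_abs_add {p : ℤ} {A E : ℝ} (hA : (3 : ℝ) ^ (-p) ≤ |A|)
    (hE : |E| ≤ 9 / 4 * (3 : ℝ) ^ (-(p + 1))) : (3 : ℝ) ^ (-(p + 3)) ≤ |A + E| := by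
  have h1 : (3 : ℝ) ^ (-(p + 1)) = (3 : ℝ) ^ (-p) / 3 := by
    rw [neg_add, zpow_add₀ three_ne_zero, zpow_neg_one, div_eq_mul_inv]
  have h3 : (3 : ℝ) ^ (-(p + 3)) = (3 : ℝ) ^ (-p) / 27 := by
    rw [neg_add, zpow_add₀ three_ne_zero]
    norm_num [div_eq_mul_inv]
  have hpos : (0 : ℝ) < (3 : ℝ) ^ (-p) := by positivity
  rw [h1] at hE
  linarith [abs_sub_abs_le_abs_add A E]

/-- **non-resonance on dyadic scales.** For `d ≥ 1`, `M ≥ 1`, any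
`a ∈ ℤ^d` and any `σ : ℤ^d → {−1,0,1}` supported in the shifted box `a + Λ_{2^M}` and
not identically zero, `|∑_n σ_n h_n| ≥ 3^{−2^{dM+1}}`. -/
theorem stmt_10 (d : ℕ) (hd : 1 ≤ d) (M : ℕ) (hM : 1 ≤ M) (a : Fin d → ℤ)
    (σ : (Fin d → ℤ) → ℤ)
    (hσval : ∀ n, σ n = -1 ∨ σ n = 0 ∨ σ n = 1)
    (hσsupp : ∀ n, ¬ (∀ j, a j ≤ n j ∧ n j < a j + 2 ^ M) → σ n = 0)
    (hσne : ∃ n, σ n ≠ 0) :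
    (3 : ℝ) ^ (-(2 ^ (d * M + 1) : ℤ)) ≤ |∑' n : Fin d → ℤ, (σ n : ℝ) * hpot d n| := by
  classical
  set s := (Fintype.piFinset fun j => Ico (a j) (a j + 2 ^ M)).filter (σ · ≠ 0)
  have hs : ∀ n, n ∈ s ↔ σ n ≠ 0 := fun n => by
    simp only [s, mem_filter, Fintype.mem_piFinset, mem_Ico, and_iff_right_iff_imp]
    exact fun h => by_contra fun hn => h (hσsupp n hn)
  have hsbox : ↑s ⊆ shiftedBox a M := fun n hn => by
    by_contra h; exact (hs n).1 hn (hσsupp n h)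
  obtain ⟨n₀, hn₀, hmax⟩ := s.exists_max_image (pm d M) (hσne.imp fun n => (hs n).2)
  have hsplit : ∑' n, (σ n : ℝ) * hpot d n =
      ∑ n ∈ s, (σ n : ℝ) * hpotHead d M n + ∑ n ∈ s, (σ n : ℝ) * hpotTail d M n := by
    rw [tsum_eq_sum (s := s) fun n hn => by simp [not_not.1 (mt (hs n).2 hn)], ← sum_add_distrib]
    simp only [hpot_eq_head_add_tail M, mul_add]
  have hhead := zpow_neg_pm_le_abs_sum_mul_hpotHead hM hsbox hn₀ hmax (c := σ)
    (by rcases hσval n₀ with h | h | h <;> simp_all)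
  have htail := abs_sum_mul_hpotTail_le hsbox (c := σ) (x := pm d M n₀ + 1)
    (fun n _ => by rcases hσval n with h | h | h <;> simp [h])
    fun n _ => pm_lt_pm_succ M n₀ n
  rw [hsplit]
  calc (3 : ℝ) ^ (-(2 ^ (d * M + 1) : ℤ))
      ≤ (3 : ℝ) ^ (-(pm d M n₀ + 3)) :=
        zpow_le_zpow_right₀ (by norm_num) (by linarith [pm_add_three_le hd n₀ M])
    _ ≤ _ := zpow_neg_add_three_le_abs_add hhead htail
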